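/- arXiv:2109.14016 — 7 statements merged into one kernel-verified Lean document; each statement's English description precedes it below -/
import Mathlib

section
/- Let A > 0, B > 0, C > 0 and suppose a real number s ≥ 0 satisfies A·s² + B·s - C ≥ 0. Then s ≥ (1/√(1+4A)) · min(C/B, B). -/
theorem step_norm_lower_bound_from_quadratic
    (A B C s : ℝ) (hA : 0 < A) (hB : 0 < B) (hC : 0 < C) (hs : 0 ≤ s)
    (h : 0 ≤ A * s ^ 2 + B * s - C) :
    (1 / Real.sqrt (1 + 4 * A)) * min (C / B) B ≤ s := by
  set r := Real.sqrt (1 + 4 * A) with hrdef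
  have hr : 0 < r := Real.sqrt_pos.mpr (by linarith)
  have hr2 : r ^ 2 = 1 + 4 * A := Real.sq_sqrt (by linarith)
  have hr1 : 1 ≤ r := by nlinarith [sq_nonneg (r - 1)]
  by_contra hlt
  push_neg at hlt
  have h1 : s < (1 / r) * (C / B) :=
    lt_of_lt_of_le hlt (by
      apply mul_le_mul_of_nonneg_left (min_le_left _ _)
      positivity)
  have h2 : s < (1 / r) * B :=
    lt_of_lt_of_le hlt (by
      apply mul_le_mul_of_nonneg_left (min_le_right _ _)
      positivity)
  have hsr : s * r < C / B := by
    rw [one_div, inv_mul_eq_div, lt_div_iff₀ hr] at h1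
    linarith
  have hsr2 : s * r < B := by
    rw [one_div, inv_mul_eq_div, lt_div_iff₀ hr] at h2
    linarith
  have hBC : B * (s * r) < C := by
    have := (lt_div_iff₀ hB).mp hsr
    linarith [this]
  -- key: A/r + 1 ≤ r, i.e. A + r ≤ r^2
  have hkey : A + r ≤ r ^ 2 := by nlinarith [sq_nonneg (r - 1)]
  nlinarith [mul_nonneg hs hr.le, mul_pos hB hr, sq_nonneg s, mul_le_mul_of_nonneg_left hsr2.le hs]
end

section
/- Let H be a symmetric d×d real matrix, ε_H > 0, ζ ∈ (0,1), and let g, d ∈ ℝ^d with d ≠ 0. Suppose: (i) dᵀ(H + 2ε_H·I)d ≥ ε_H‖d‖² (equivalently dᵀHd ≥ -ε_H‖d‖²), and (ii) ‖r̂‖ ≤ (1/2)ε_H·ζ·‖d‖ where r̂ := (H + 2ε_H·I)d + g. Then for every α ∈ [0,1]: α·gᵀd + (α²/2)·dᵀHd ≤ (α/2)·ε_H·(ζ - 1)·‖d‖². -/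
open RealInnerProductSpace

theorem capped_cg_sol_quadratic_decrease {n : ℕ}
    (A : EuclideanSpace ℝ (Fin n) →L[ℝ] EuclideanSpace ℝ (Fin n))
    (hsymm : ∀ u v : EuclideanSpace ℝ (Fin n), ⟪A u, v⟫ = ⟪u, A v⟫)
    (ε_H ζ : ℝ) (hε : 0 < ε_H) (hζ : ζ ∈ Set.Ioo (0:ℝ) 1)
    (g d : EuclideanSpace ℝ (Fin n)) (hd : d ≠ 0)
    (hcurv : ε_H * ‖d‖ ^ 2 ≤ ⟪d, A d + (2 * ε_H) • d⟫)
    (hres : ‖A d + (2 * ε_H) • d + g‖ ≤ (1 / 2) * ε_H * ζ * ‖d‖) :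
    ∀ α ∈ Set.Icc (0:ℝ) 1,
      α * ⟪g, d⟫ + (α ^ 2 / 2) * ⟪d, A d⟫ ≤ (α / 2) * ε_H * (ζ - 1) * ‖d‖ ^ 2 := by
  intro α hα
  obtain ⟨hα0, hα1⟩ := hα
  have hnd : 0 < ‖d‖ := norm_pos_iff.mpr hd
  have hrd : ⟪A d + (2 * ε_H) • d + g, d⟫ ≤ (1 / 2) * ε_H * ζ * ‖d‖ * ‖d‖ :=
    le_trans (real_inner_le_norm _ _) (mul_le_mul_of_nonneg_right hres (norm_nonneg d))
  have e1 : ⟪A d + (2 * ε_H) • d + g, d⟫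
      = ⟪d, A d⟫ + 2 * ε_H * ‖d‖ ^ 2 + ⟪g, d⟫ := by
    rw [inner_add_left, inner_add_left, real_inner_smul_left,
      real_inner_self_eq_norm_sq, real_inner_comm (A d) d]
  have e2 : ⟪d, A d + (2 * ε_H) • d⟫ = ⟪d, A d⟫ + 2 * ε_H * ‖d‖ ^ 2 := by
    rw [inner_add_right, real_inner_smul_right, real_inner_self_eq_norm_sq]
  rw [e2] at hcurv
  rw [e1] at hrd
  have hs : ‖d‖ * ‖d‖ = ‖d‖ ^ 2 := (sq ‖d‖).symm
  rw [show (1:ℝ)/2*ε_H*ζ*‖d‖*‖d‖ = 1/2*ε_H*ζ*‖d‖^2 from by ring] at hrd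
  have hX : (0:ℝ) ≤ ⟪d, A d⟫ + ε_H * ‖d‖ ^ 2 := by linarith
  have hαq : (0:ℝ) ≤ α - α ^ 2 / 2 := by nlinarith
  nlinarith [mul_nonneg hαq hX, mul_le_mul_of_nonneg_left hrd hα0,
    mul_nonneg (mul_nonneg hα0 hε.le) (sq_nonneg ‖d‖),
    mul_nonneg (mul_nonneg (sq_nonneg α) hε.le) (sq_nonneg ‖d‖)]
end

section
/- Let H be a symmetric d×d real matrix, ε_H > 0, ζ ∈ (0,1), δ_g ≥ 0, and d, g ∈ ℝ^d with ‖d‖ > 0. Suppose: (i) dᵀ(H + 2ε_H·I)d ≥ ε_H‖d‖², (ii) ‖r̂‖ ≤ (1/2)ε_H·ζ·‖d‖ with r̂ = (H + 2ε_H·I)d + g, (iii) ‖∇f - g‖ ≤ δ_g for some vector ∇f ∈ ℝ^d, and (iv) δ_g ≤ ((1-ζ)/8)·ε_H·‖d‖. Then dᵀ∇f ≤ -(3/8)·ε_H·‖d‖². -/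
open RealInnerProductSpace

theorem descent_direction_margin {n : ℕ}
    (A : EuclideanSpace ℝ (Fin n) →L[ℝ] EuclideanSpace ℝ (Fin n))
    (hsymm : ∀ u v : EuclideanSpace ℝ (Fin n), ⟪A u, v⟫ = ⟪u, A v⟫)
    (ε_H ζ δ_g : ℝ) (hε : 0 < ε_H) (hζ : ζ ∈ Set.Ioo (0:ℝ) 1) (hδg : 0 ≤ δ_g)
    (d g gradf : EuclideanSpace ℝ (Fin n)) (hd : 0 < ‖d‖)
    (hcurv : ε_H * ‖d‖ ^ 2 ≤ ⟪d, A d + (2 * ε_H) • d⟫)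
    (hres : ‖A d + (2 * ε_H) • d + g‖ ≤ (1 / 2) * ε_H * ζ * ‖d‖)
    (hgrad : ‖gradf - g‖ ≤ δ_g)
    (hδ : δ_g ≤ ((1 - ζ) / 8) * ε_H * ‖d‖) :
    ⟪d, gradf⟫ ≤ -(3 / 8) * ε_H * ‖d‖ ^ 2 := by
  obtain ⟨hζ0, hζ1⟩ := hζ
  set r : EuclideanSpace ℝ (Fin n) := A d + (2 * ε_H) • d + g with hr
  have hg : g = r - (A d + (2 * ε_H) • d) := by rw [hr]; abel
  have h1 : ⟪d, r⟫ ≤ ‖d‖ * ((1 / 2) * ε_H * ζ * ‖d‖) := by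
    calc ⟪d, r⟫ ≤ ‖d‖ * ‖r‖ := real_inner_le_norm d r
    _ ≤ ‖d‖ * ((1 / 2) * ε_H * ζ * ‖d‖) := by
        exact mul_le_mul_of_nonneg_left hres (norm_nonneg d)
  have h2 : ⟪d, gradf - g⟫ ≤ ‖d‖ * δ_g := by
    calc ⟪d, gradf - g⟫ ≤ ‖d‖ * ‖gradf - g‖ := real_inner_le_norm _ _
    _ ≤ ‖d‖ * δ_g := mul_le_mul_of_nonneg_left hgrad (norm_nonneg d)
  have h3 : ‖d‖ * δ_g ≤ ‖d‖ * (((1 - ζ) / 8) * ε_H * ‖d‖) :=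
    mul_le_mul_of_nonneg_left hδ (norm_nonneg d)
  have key : ⟪d, gradf⟫ = ⟪d, r⟫ - ⟪d, A d + (2 * ε_H) • d⟫ + ⟪d, gradf - g⟫ := by
    rw [hg]
    simp [inner_sub_right, inner_add_right]
  rw [key]
  have hnn : ‖d‖ * ‖d‖ = ‖d‖ ^ 2 := (sq ‖d‖).symm
  nlinarith [sq_nonneg ‖d‖, mul_pos hε (mul_pos hd hd)]
end

section
/- Let f : ℝ^d → ℝ be C² with L_H-Lipschitz Hessian, x ∈ ℝ^d, and let d ∈ ℝ^d satisfy: (i) dᵀH d = -‖d‖³ ≤ -ε_H‖d‖² for a symmetric matrix H with ‖H - ∇²f(x)‖ ≤ δ_H, (ii) ∇f(x)ᵀd ≤ 0, (iii) δ_H ≤ ε_H/4, and ε_H > 0, η > 0. Then for every α ∈ (0, 1] with α < 3/(2(L_H + η)): f(x + α·d) - f(x) ≤ -(η/6)·α³·‖d‖³. -/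
/-!
Along the ray `t ↦ x + t • d`, the Lipschitz Hessian gives the cubic Taylor upper bound
`f (x + α • d) ≤ f x + α ∇f(x)ᵀd + α²/2 dᵀ∇²f(x)d + L_H α³ ‖d‖³ / 6`. The first-order term is
nonpositive, and since `dᵀ A d = -‖d‖³ ≤ -ε_H ‖d‖²` forces `δ_H ≤ ε_H / 4 ≤ ‖d‖ / 4`, the true curvature
satisfies `dᵀ∇²f(x)d ≤ -‖d‖³ + δ_H ‖d‖² ≤ -¾ ‖d‖³`. The step-size bound `(L_H + η) α < 3/2` then lets the
quadratic term absorb the cubic one with `η α³ ‖d‖³ / 6` to spare.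
-/

open RealInnerProductSpace

theorem image_le_of_hasDerivAt_le {u v u' v' : ℝ → ℝ} (hu : ∀ t, HasDerivAt u (u' t) t)
    (hv : ∀ t, HasDerivAt v (v' t) t) (h₀ : u 0 ≤ v 0) (hle : ∀ t, 0 ≤ t → u' t ≤ v' t)
    {t : ℝ} (ht : 0 ≤ t) : u t ≤ v t :=
  image_le_of_deriv_right_le_deriv_boundary (fun s _ => (hu s).continuousAt.continuousWithinAt)
    (fun s _ => (hu s).hasDerivWithinAt) h₀ (fun s _ => (hv s).continuousAt.continuousWithinAt)
    (fun s _ => (hv s).hasDerivWithinAt) (fun s hs => hle s hs.1) ⟨ht, le_rfl⟩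

theorem le_cubic_taylor_of_hasDerivAt {g g' g'' : ℝ → ℝ} {C : ℝ}
    (hg : ∀ t, HasDerivAt g (g' t) t) (hg' : ∀ t, HasDerivAt g' (g'' t) t)
    (hg'' : ∀ t, 0 ≤ t → g'' t ≤ g'' 0 + C * t) {t : ℝ} (ht : 0 ≤ t) :
    g t ≤ g 0 + t * g' 0 + t ^ 2 / 2 * g'' 0 + C * t ^ 3 / 6 := by
  have hquadratic : ∀ s, HasDerivAt (fun s => g' 0 + s * g'' 0 + C * s ^ 2 / 2)
      (g'' 0 + C * s) s := fun s => by
    refine ((((hasDerivAt_id s).mul_const (g'' 0)).const_add (g' 0)).add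
      (((hasDerivAt_pow 2 s).const_mul C).div_const 2)).congr_deriv ?_
    push_cast; ring
  have hcubic : ∀ s, HasDerivAt (fun s => g 0 + s * g' 0 + s ^ 2 / 2 * g'' 0 + C * s ^ 3 / 6)
      (g' 0 + s * g'' 0 + C * s ^ 2 / 2) s := fun s => by
    refine (((((hasDerivAt_id s).mul_const (g' 0)).const_add (g 0)).add
      (((hasDerivAt_pow 2 s).div_const 2).mul_const (g'' 0))).add
      (((hasDerivAt_pow 3 s).const_mul C).div_const 6)).congr_deriv ?_
    push_cast; ring
  exact image_le_of_hasDerivAt_le hg hcubic (by simp)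
    (fun s hs => image_le_of_hasDerivAt_le hg' hquadratic (by simp) hg'' hs) ht

theorem ContDiff.le_cubic_taylor_of_hessian_lipschitz {E : Type*} [NormedAddCommGroup E]
    [NormedSpace ℝ E] {f : E → ℝ} (hf : ContDiff ℝ 2 f) {L : ℝ} {x : E}
    (hlip : ∀ y, ‖fderiv ℝ (fderiv ℝ f) y - fderiv ℝ (fderiv ℝ f) x‖ ≤ L * ‖y - x‖)
    (d : E) {t : ℝ} (ht : 0 ≤ t) :
    f (x + t • d) ≤ f x + t * fderiv ℝ f x d + t ^ 2 / 2 * fderiv ℝ (fderiv ℝ f) x d d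
      + L * ‖d‖ ^ 3 * t ^ 3 / 6 := by
  have hf₁ : Differentiable ℝ f := hf.differentiable (by norm_num)
  have hf₂ : Differentiable ℝ (fderiv ℝ f) :=
    (hf.fderiv_right (m := 1) (by norm_num)).differentiable (by norm_num)
  have hline : ∀ s : ℝ, HasDerivAt (fun s : ℝ => x + s • d) d s := fun s => by
    simpa using ((hasDerivAt_id s).smul_const d).const_add x
  have hhessian : ∀ s : ℝ, 0 ≤ s → fderiv ℝ (fderiv ℝ f) (x + s • d) d d
      ≤ fderiv ℝ (fderiv ℝ f) x d d + L * ‖d‖ ^ 3 * s := fun s hs => by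
    set D := fderiv ℝ (fderiv ℝ f) (x + s • d) - fderiv ℝ (fderiv ℝ f) x
    have hD : ‖D‖ ≤ L * (s * ‖d‖) := by
      simpa [norm_smul, abs_of_nonneg hs] using hlip (x + s • d)
    calc fderiv ℝ (fderiv ℝ f) (x + s • d) d d = fderiv ℝ (fderiv ℝ f) x d d + D d d := by
          simp [D]
      _ ≤ fderiv ℝ (fderiv ℝ f) x d d + ‖D‖ * ‖d‖ * ‖d‖ := by
          gcongr; exact (Real.le_norm_self _).trans (D.le_opNorm₂ d d)
      _ ≤ fderiv ℝ (fderiv ℝ f) x d d + L * (s * ‖d‖) * ‖d‖ * ‖d‖ := by gcongr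
      _ = fderiv ℝ (fderiv ℝ f) x d d + L * ‖d‖ ^ 3 * s := by ring
  simpa using le_cubic_taylor_of_hasDerivAt
    (fun s => (hf₁ _).hasFDerivAt.comp_hasDerivAt s (hline s))
    (fun s => ((hf₂ _).hasFDerivAt.comp_hasDerivAt s (hline s)).clm_apply (hasDerivAt_const s d))
    (by simpa using hhessian) ht

theorem ContinuousLinearMap.apply_apply_le_inner_add {E : Type*} [NormedAddCommGroup E]
    [InnerProductSpace ℝ E] {H : E →L[ℝ] E →L[ℝ] ℝ} {v d : E} {δ : ℝ}
    (h : ‖H d - innerSL ℝ v‖ ≤ δ * ‖d‖) : H d d ≤ ⟪v, d⟫ + δ * ‖d‖ ^ 2 :=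
  calc H d d = ⟪v, d⟫ + (H d - innerSL ℝ v) d := by simp
    _ ≤ ⟪v, d⟫ + ‖H d - innerSL ℝ v‖ * ‖d‖ := by
        gcongr; exact (Real.le_norm_self _).trans ((H d - innerSL ℝ v).le_opNorm d)
    _ ≤ ⟪v, d⟫ + δ * ‖d‖ * ‖d‖ := by gcongr
    _ = ⟪v, d⟫ + δ * ‖d‖ ^ 2 := by ring

theorem cubic_model_le_of_step_lt {α b g₁ g₂ L η : ℝ} (hα : 0 < α)
    (hαL : α < 3 / (2 * (L + η))) (hb : 0 ≤ b) (hg₁ : g₁ ≤ 0) (hg₂ : g₂ ≤ -(3 / 4) * b ^ 3) :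
    α * g₁ + α ^ 2 / 2 * g₂ + L * b ^ 3 * α ^ 3 / 6 ≤ -(η / 6) * α ^ 3 * b ^ 3 := by
  have hstep : (L + η) * α ≤ 3 / 2 := by
    rcases le_or_gt (L + η) 0 with h | h
    · nlinarith
    · rw [lt_div_iff₀ (by positivity)] at hαL
      linarith
  have hαb : 0 ≤ α ^ 2 * b ^ 3 := by positivity
  linarith [mul_nonpos_of_nonneg_of_nonpos hα.le hg₁,
    mul_le_mul_of_nonneg_left hg₂ (by positivity : (0 : ℝ) ≤ α ^ 2 / 2),
    mul_nonneg hαb (by linarith : 0 ≤ 3 / 2 - (L + η) * α)]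

theorem negative_curvature_step_decrease_general {n : ℕ}
    (f : EuclideanSpace ℝ (Fin n) → ℝ) (hf : ContDiff ℝ 2 f)
    (L_H η ε_H δ_H : ℝ)
    (hlip : ∀ u v : EuclideanSpace ℝ (Fin n),
      ‖fderiv ℝ (fderiv ℝ f) u - fderiv ℝ (fderiv ℝ f) v‖ ≤ L_H * ‖u - v‖)
    (x d : EuclideanSpace ℝ (Fin n))
    (A : EuclideanSpace ℝ (Fin n) →L[ℝ] EuclideanSpace ℝ (Fin n))
    (hA : ∀ u : EuclideanSpace ℝ (Fin n),
      ‖fderiv ℝ (fderiv ℝ f) x u - innerSL ℝ (A u)‖ ≤ δ_H * ‖u‖)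
    (hcurv_eq : ⟪d, A d⟫ = -‖d‖ ^ 3)
    (hcurv_le : ⟪d, A d⟫ ≤ -ε_H * ‖d‖ ^ 2)
    (hdesc : fderiv ℝ f x d ≤ 0)
    (hδH : δ_H ≤ ε_H / 4) :
    ∀ α : ℝ, α ∈ Set.Ioc (0:ℝ) 1 → α < 3 / (2 * (L_H + η)) →
      f (x + α • d) - f x ≤ -(η / 6) * α ^ 3 * ‖d‖ ^ 3 := by
  rintro α ⟨hα, -⟩ hαL
  have hδ : δ_H * ‖d‖ ^ 2 ≤ ‖d‖ ^ 3 / 4 := by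
    nlinarith [hcurv_eq ▸ hcurv_le, sq_nonneg ‖d‖]
  have hcurv : fderiv ℝ (fderiv ℝ f) x d d ≤ -(3 / 4) * ‖d‖ ^ 3 := by
    have h := (fderiv ℝ (fderiv ℝ f) x).apply_apply_le_inner_add (hA d)
    rw [real_inner_comm, hcurv_eq] at h
    linarith
  have htaylor := hf.le_cubic_taylor_of_hessian_lipschitz (fun y => hlip y x) d hα.le
  linarith [cubic_model_le_of_step_lt hα hαL (norm_nonneg d) hdesc hcurv]

theorem negative_curvature_step_decrease {n : ℕ}
    (f : EuclideanSpace ℝ (Fin n) → ℝ) (hf : ContDiff ℝ 2 f)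
    (L_H η ε_H δ_H : ℝ) (hL : 0 < L_H) (hη : 0 < η) (hεH : 0 < ε_H)
    (hlip : ∀ u v : EuclideanSpace ℝ (Fin n),
      ‖fderiv ℝ (fderiv ℝ f) u - fderiv ℝ (fderiv ℝ f) v‖ ≤ L_H * ‖u - v‖)
    (x d : EuclideanSpace ℝ (Fin n))
    (A : EuclideanSpace ℝ (Fin n) →L[ℝ] EuclideanSpace ℝ (Fin n))
    (hsymm : ∀ u v : EuclideanSpace ℝ (Fin n), ⟪A u, v⟫ = ⟪u, A v⟫)
    (hA : ∀ u : EuclideanSpace ℝ (Fin n),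
      ‖fderiv ℝ (fderiv ℝ f) x u - innerSL ℝ (A u)‖ ≤ δ_H * ‖u‖)
    (hcurv_eq : ⟪d, A d⟫ = -‖d‖ ^ 3)
    (hcurv_le : ⟪d, A d⟫ ≤ -ε_H * ‖d‖ ^ 2)
    (hdesc : fderiv ℝ f x d ≤ 0)
    (hδH : δ_H ≤ ε_H / 4) :
    ∀ α : ℝ, α ∈ Set.Ioc (0:ℝ) 1 → α < 3 / (2 * (L_H + η)) →
      f (x + α • d) - f x ≤ -(η / 6) * α ^ 3 * ‖d‖ ^ 3 :=
  negative_curvature_step_decrease_general f hf L_H η ε_H δ_H hlip x d A hA hcurv_eq hcurv_le hdesc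
    hδH
end

section
/- Let f : ℝ^d → ℝ be C² with L_H-Lipschitz Hessian, and let x, d ∈ ℝ^d, g ∈ ℝ^d, H symmetric, ε_H > 0, ε_g > 0, ζ ∈ (0,1), δ_g ≥ 0, δ_H ≥ 0 satisfy: (i) ‖r̂‖ ≤ (1/2)ε_H·ζ·‖d‖ where r̂ = (H + 2ε_H·I)d + g, (ii) ‖∇f(x) - g‖ ≤ δ_g, (iii) ‖∇²f(x) - H‖ ≤ δ_H, (iv) δ_H ≤ ε_H/2, (v) δ_g ≤ ((1-ζ)/8)·max(ε_g, ε_H‖d‖), and (vi) ‖d‖ ≤ ε_g/ε_H. Then ‖∇f(x + d)‖ ≤ (L_H/2)·(ε_g/ε_H)² + 4·ε_g. -/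
/-!
Split `∇f(x + d)` into the Taylor remainder `∇f(x + d) - ∇f(x) - ∇²f(x) d`, the Hessian error
`(∇²f(x) - A) d`, the gradient error `∇f(x) - g`, the residual `A d + 2ε_H d + g` and
`-2ε_H d`. The remainder is at most `L_H/2 ‖d‖²`, by comparing it along the segment with
`t ↦ L_H ‖d‖² t² / 2`; the other pieces are bounded by hypotheses, and `ε_H ‖d‖ ≤ ε_g` turns every term linear in
`‖d‖` into a multiple of `ε_g`.
-/

open RealInnerProductSpace InnerProductSpace Set

theorem norm_image_add_sub_sub_fderiv_le {E F : Type*} [NormedAddCommGroup E] [NormedSpace ℝ E]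
    [NormedAddCommGroup F] [NormedSpace ℝ F] {G : E → F} {L : ℝ} (hG : Differentiable ℝ G)
    (hlip : ∀ u v : E, ‖fderiv ℝ G u - fderiv ℝ G v‖ ≤ L * ‖u - v‖) (x d : E) :
    ‖G (x + d) - G x - fderiv ℝ G x d‖ ≤ L / 2 * ‖d‖ ^ 2 := by
  set φ : ℝ → F := fun t => G (x + t • d) - G x - t • fderiv ℝ G x d
  have hφ : ∀ t : ℝ, HasDerivAt φ (fderiv ℝ G (x + t • d) d - fderiv ℝ G x d) t := by
    intro t
    have hline : HasDerivAt (fun t : ℝ => x + t • d) d t := by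
      simpa using ((hasDerivAt_id t).smul_const d).const_add x
    have := (((hG _).hasFDerivAt.comp_hasDerivAt t hline).sub_const (G x)).sub
      ((hasDerivAt_id t).smul_const (fderiv ℝ G x d))
    rw [one_smul] at this
    exact this
  have hB : ∀ t : ℝ, HasDerivAt (fun t : ℝ => L / 2 * ‖d‖ ^ 2 * t ^ 2) (L * ‖d‖ ^ 2 * t) t :=
    fun t => ((hasDerivAt_pow 2 t).const_mul (L / 2 * ‖d‖ ^ 2)).congr_deriv (by push_cast; ring)
  have hbound : ∀ t ∈ Ico (0 : ℝ) 1,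
      ‖fderiv ℝ G (x + t • d) d - fderiv ℝ G x d‖ ≤ L * ‖d‖ ^ 2 * t := by
    intro t ht
    calc ‖fderiv ℝ G (x + t • d) d - fderiv ℝ G x d‖
        = ‖(fderiv ℝ G (x + t • d) - fderiv ℝ G x) d‖ := rfl
      _ ≤ ‖fderiv ℝ G (x + t • d) - fderiv ℝ G x‖ * ‖d‖ := ContinuousLinearMap.le_opNorm _ _
      _ ≤ L * ‖t • d‖ * ‖d‖ := by
          gcongr
          simpa using hlip (x + t • d) x
      _ = L * ‖d‖ ^ 2 * t := by
          rw [norm_smul, Real.norm_of_nonneg ht.1]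
          ring
  have hφ1 := image_norm_le_of_norm_deriv_right_le_deriv_boundary
    (fun t _ => (hφ t).continuousAt.continuousWithinAt) (fun t _ => (hφ t).hasDerivWithinAt)
    (by simp [φ]) hB hbound (right_mem_Icc.2 zero_le_one)
  simpa [φ] using hφ1

theorem innerSL_gradient {E : Type*} [NormedAddCommGroup E] [InnerProductSpace ℝ E] [CompleteSpace E]
    (f : E → ℝ) (x : E) : innerSL ℝ (gradient f x) = fderiv ℝ f x := by
  ext u
  rw [innerSL_apply_apply, ← toDual_apply_apply, toDual_gradient]

theorem norm_gradient_add_le {E : Type*} [NormedAddCommGroup E] [InnerProductSpace ℝ E]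
    [CompleteSpace E] (f : E → ℝ) (x d g : E) (A : E →L[ℝ] E) (c : ℝ) :
    ‖gradient f (x + d)‖ ≤ ‖fderiv ℝ f (x + d) - fderiv ℝ f x - fderiv ℝ (fderiv ℝ f) x d‖
      + ‖fderiv ℝ (fderiv ℝ f) x d - innerSL ℝ (A d)‖ + ‖gradient f x - g‖
      + ‖A d + c • d + g‖ + ‖c • d‖ := by
  set taylor := fderiv ℝ f (x + d) - fderiv ℝ f x - fderiv ℝ (fderiv ℝ f) x d
  set hessErr := fderiv ℝ (fderiv ℝ f) x d - innerSL ℝ (A d)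
  have hsplit : fderiv ℝ f (x + d) = taylor + hessErr + innerSL ℝ (gradient f x - g)
      + innerSL ℝ (A d + c • d + g) - innerSL ℝ (c • d) := by
    simp only [taylor, hessErr, map_sub, map_add, innerSL_gradient]
    abel
  calc ‖gradient f (x + d)‖ = ‖fderiv ℝ f (x + d)‖ := by rw [← innerSL_gradient, innerSL_apply_norm]
    _ ≤ ‖taylor + hessErr + innerSL ℝ (gradient f x - g) + innerSL ℝ (A d + c • d + g)‖
        + ‖innerSL ℝ (c • d)‖ := hsplit ▸ norm_sub_le _ _
    _ ≤ _ := by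
      grw [norm_add₄_le]
      simp only [innerSL_apply_norm, le_refl]

theorem gradient_bound_at_termination_general {n : ℕ}
    (f : EuclideanSpace ℝ (Fin n) → ℝ) (hf : ContDiff ℝ 2 f)
    (L_H ε_H ε_g ζ δ_g δ_H : ℝ) (hL : 0 < L_H) (hεH : 0 < ε_H)
    (hζ : ζ ∈ Set.Ioo (0:ℝ) 1)
    (hlip : ∀ u v : EuclideanSpace ℝ (Fin n),
      ‖fderiv ℝ (fderiv ℝ f) u - fderiv ℝ (fderiv ℝ f) v‖ ≤ L_H * ‖u - v‖)
    (x d g : EuclideanSpace ℝ (Fin n))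
    (A : EuclideanSpace ℝ (Fin n) →L[ℝ] EuclideanSpace ℝ (Fin n))
    (hres : ‖A d + (2 * ε_H) • d + g‖ ≤ (1 / 2) * ε_H * ζ * ‖d‖)
    (hgrad : ‖gradient f x - g‖ ≤ δ_g)
    (hA : ∀ u : EuclideanSpace ℝ (Fin n),
      ‖fderiv ℝ (fderiv ℝ f) x u - innerSL ℝ (A u)‖ ≤ δ_H * ‖u‖)
    (hδH : δ_H ≤ ε_H / 2)
    (hδg : δ_g ≤ ((1 - ζ) / 8) * max ε_g (ε_H * ‖d‖))
    (hdsmall : ‖d‖ ≤ ε_g / ε_H) :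
    ‖gradient f (x + d)‖ ≤ L_H / 2 * (ε_g / ε_H) ^ 2 + 4 * ε_g := by
  have hstep : ε_H * ‖d‖ ≤ ε_g := (le_div_iff₀' hεH).1 hdsmall
  have hεg : 0 ≤ ε_g := le_trans (by positivity) hstep
  rw [max_eq_left hstep] at hδg
  have htaylor := norm_image_add_sub_sub_fderiv_le
    ((hf.fderiv_right (m := 1) le_rfl).differentiable one_ne_zero) hlip x d
  have hshift : ‖(2 * ε_H) • d‖ = 2 * ε_H * ‖d‖ := by
    rw [norm_smul, Real.norm_of_nonneg (by positivity)]
  calc ‖gradient f (x + d)‖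
      ≤ L_H / 2 * ‖d‖ ^ 2 + δ_H * ‖d‖ + δ_g + 1 / 2 * ε_H * ζ * ‖d‖ + 2 * ε_H * ‖d‖ := by
        grw [norm_gradient_add_le f x d g A (2 * ε_H), htaylor, hA d, hgrad, hres, hshift]
    _ ≤ L_H / 2 * (ε_g / ε_H) ^ 2 + 4 * ε_g := by
        have hsq : L_H / 2 * ‖d‖ ^ 2 ≤ L_H / 2 * (ε_g / ε_H) ^ 2 := by gcongr
        have hδHd : δ_H * ‖d‖ ≤ ε_H / 2 * ‖d‖ := by gcongr
        have hζd : ζ * (ε_H * ‖d‖) ≤ ζ * ε_g := mul_le_mul_of_nonneg_left hstep hζ.1.le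
        have hζg : ζ * ε_g ≤ ε_g := mul_le_of_le_one_left hεg hζ.2.le
        linarith

theorem gradient_bound_at_termination {n : ℕ}
    (f : EuclideanSpace ℝ (Fin n) → ℝ) (hf : ContDiff ℝ 2 f)
    (L_H ε_H ε_g ζ δ_g δ_H : ℝ) (hL : 0 < L_H) (hεH : 0 < ε_H) (hεg : 0 < ε_g)
    (hζ : ζ ∈ Set.Ioo (0:ℝ) 1) (hδg0 : 0 ≤ δ_g) (hδH0 : 0 ≤ δ_H)
    (hlip : ∀ u v : EuclideanSpace ℝ (Fin n),
      ‖fderiv ℝ (fderiv ℝ f) u - fderiv ℝ (fderiv ℝ f) v‖ ≤ L_H * ‖u - v‖)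
    (x d g : EuclideanSpace ℝ (Fin n))
    (A : EuclideanSpace ℝ (Fin n) →L[ℝ] EuclideanSpace ℝ (Fin n))
    (hsymm : ∀ u v : EuclideanSpace ℝ (Fin n), ⟪A u, v⟫ = ⟪u, A v⟫)
    (hres : ‖A d + (2 * ε_H) • d + g‖ ≤ (1 / 2) * ε_H * ζ * ‖d‖)
    (hgrad : ‖gradient f x - g‖ ≤ δ_g)
    (hA : ∀ u : EuclideanSpace ℝ (Fin n),
      ‖fderiv ℝ (fderiv ℝ f) x u - innerSL ℝ (A u)‖ ≤ δ_H * ‖u‖)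
    (hδH : δ_H ≤ ε_H / 2)
    (hδg : δ_g ≤ ((1 - ζ) / 8) * max ε_g (ε_H * ‖d‖))
    (hdsmall : ‖d‖ ≤ ε_g / ε_H) :
    ‖gradient f (x + d)‖ ≤ L_H / 2 * (ε_g / ε_H) ^ 2 + 4 * ε_g :=
  gradient_bound_at_termination_general f hf L_H ε_H ε_g ζ δ_g δ_H hL hεH hζ hlip x d g A hres hgrad
    hA hδH hδg hdsmall
end

section
/- Let f : ℝ^d → ℝ be C² with L_H-Lipschitz Hessian, x, d ∈ ℝ^d with ‖d‖ ≤ ε_g/ε_H, and let H be a symmetric matrix with ‖H - ∇²f(x)‖ ≤ δ_H ≤ ε_H/4 and λ_min(H) ≥ -ε_H, where λ_min denotes the smallest eigenvalue. Then λ_min(∇²f(x + d)) ≥ -((5/4)·ε_H + L_H·ε_g/ε_H). -/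
open RealInnerProductSpace

theorem second_order_bound_at_termination {n : ℕ}
    (f : EuclideanSpace ℝ (Fin n) → ℝ) (hf : ContDiff ℝ 2 f)
    (L_H ε_H ε_g δ_H : ℝ) (hL : 0 < L_H) (hεH : 0 < ε_H) (hεg : 0 < ε_g)
    (hlip : ∀ u v : EuclideanSpace ℝ (Fin n),
      ‖fderiv ℝ (fderiv ℝ f) u - fderiv ℝ (fderiv ℝ f) v‖ ≤ L_H * ‖u - v‖)
    (x d : EuclideanSpace ℝ (Fin n)) (hdsmall : ‖d‖ ≤ ε_g / ε_H)
    (A : EuclideanSpace ℝ (Fin n) →L[ℝ] EuclideanSpace ℝ (Fin n))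
    (hsymm : ∀ u v : EuclideanSpace ℝ (Fin n), ⟪A u, v⟫ = ⟪u, A v⟫)
    (hA : ∀ u : EuclideanSpace ℝ (Fin n),
      ‖fderiv ℝ (fderiv ℝ f) x u - innerSL ℝ (A u)‖ ≤ δ_H * ‖u‖)
    (hδH : δ_H ≤ ε_H / 4)
    (hmin : ∀ u : EuclideanSpace ℝ (Fin n), -ε_H * ‖u‖ ^ 2 ≤ ⟪u, A u⟫) :
    ∀ u : EuclideanSpace ℝ (Fin n),
      -((5 / 4) * ε_H + L_H * (ε_g / ε_H)) * ‖u‖ ^ 2 ≤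
        (fderiv ℝ (fderiv ℝ f) (x + d) u) u := by
  intro u
  set F := fderiv ℝ (fderiv ℝ f) with hF
  have hu : (0:ℝ) ≤ ‖u‖ * ‖u‖ := mul_nonneg (norm_nonneg _) (norm_nonneg _)
  have h1 : |F (x + d) u u - F x u u| ≤ L_H * ‖d‖ * (‖u‖ * ‖u‖) := by
    have e : F (x + d) u u - F x u u = ((F (x + d) - F x) u) u := by simp
    rw [e, ← Real.norm_eq_abs]
    calc ‖((F (x + d) - F x) u) u‖ ≤ ‖(F (x + d) - F x) u‖ * ‖u‖ :=
          ContinuousLinearMap.le_opNorm _ u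
      _ ≤ (‖F (x + d) - F x‖ * ‖u‖) * ‖u‖ := by
          gcongr
          exact ContinuousLinearMap.le_opNorm _ u
      _ ≤ (L_H * ‖d‖ * ‖u‖) * ‖u‖ := by
          gcongr
          simpa using hlip (x + d) x
      _ = L_H * ‖d‖ * (‖u‖ * ‖u‖) := by ring
  have h2 : |F x u u - ⟪A u, u⟫| ≤ δ_H * (‖u‖ * ‖u‖) := by
    have e : F x u u - ⟪A u, u⟫ = ((F x u - innerSL ℝ (A u))) u := by simp
    rw [e, ← Real.norm_eq_abs]
    calc ‖(F x u - innerSL ℝ (A u)) u‖ ≤ ‖F x u - innerSL ℝ (A u)‖ * ‖u‖ :=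
          ContinuousLinearMap.le_opNorm _ u
      _ ≤ (δ_H * ‖u‖) * ‖u‖ := by gcongr; exact hA u
      _ = δ_H * (‖u‖ * ‖u‖) := by ring
  have h3 : -ε_H * (‖u‖ * ‖u‖) ≤ ⟪A u, u⟫ := by
    rw [real_inner_comm]
    have := hmin u
    rw [pow_two] at this
    exact this
  have hd : L_H * ‖d‖ ≤ L_H * (ε_g / ε_H) :=
    mul_le_mul_of_nonneg_left hdsmall hL.le
  have h1' := abs_le.mp h1
  have h2' := abs_le.mp h2
  rw [pow_two]
  nlinarith [h1'.1, h1'.2, h2'.1, h2'.2, h3, hd, hδH, hu,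
    mul_nonneg (sub_nonneg.mpr hd) hu, mul_nonneg (sub_nonneg.mpr hδH) hu]
end

section
/- Let f : ℝ^d → ℝ be C² with L_H-Lipschitz Hessian on ℝ^d, let x, d ∈ ℝ^d, let H be symmetric with ‖∇²f(x) - H‖ ≤ δ_H and dᵀH d ≤ -‖d‖³, and let g ∈ ℝ^d with ‖∇f(x) - g‖ ≤ δ_g and dᵀg ≤ 0. Then for any α ∈ [0,1]: f(x + α·d) - f(x) ≤ α·δ_g·‖d‖ - (α²/2)·‖d‖³ + (α²/2)·δ_H·‖d‖² + (L_H/6)·α³·‖d‖³. -/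
/-!
Along the ray `φ(t) = f (x + t • d)`, the Lipschitz bound on the Hessian gives
`φ''(t) ≤ φ''(0) + L_H ‖d‖³ t`; integrating twice yields the cubic Taylor bound
`φ(α) ≤ φ(0) + α φ'(0) + α²/2 φ''(0) + L_H/6 α³ ‖d‖³`. The inexact data control the two
remaining terms: `φ'(0) = ⟪∇f x, d⟫ ≤ ⟪g, d⟫ + δ_g ‖d‖ ≤ δ_g ‖d‖` and
`φ''(0) ≤ ⟪A d, d⟫ + δ_H ‖d‖² ≤ -‖d‖³ + δ_H ‖d‖²`.
-/

open RealInnerProductSpace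

lemma le_of_hasDerivAt_le_of_nonneg {u v u' v' : ℝ → ℝ}
    (hu : ∀ t, HasDerivAt u (u' t) t) (hv : ∀ t, HasDerivAt v (v' t) t) (h0 : u 0 ≤ v 0)
    (hderiv : ∀ t, 0 ≤ t → u' t ≤ v' t) {t : ℝ} (ht : 0 ≤ t) : u t ≤ v t :=
  image_le_of_deriv_right_le_deriv_boundary (fun s _ => (hu s).continuousAt.continuousWithinAt)
    (fun s _ => (hu s).hasDerivWithinAt) h0 (fun s _ => (hv s).continuousAt.continuousWithinAt)
    (fun s _ => (hv s).hasDerivWithinAt) (fun s hs => hderiv s hs.1) ⟨ht, le_rfl⟩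

lemma le_cubic_taylor_of_hasDerivAt_s16 {φ φ' φ'' : ℝ → ℝ} {M : ℝ}
    (hφ : ∀ t, HasDerivAt φ (φ' t) t) (hφ' : ∀ t, HasDerivAt φ' (φ'' t) t)
    (hφ'' : ∀ t, 0 ≤ t → φ'' t ≤ φ'' 0 + M * t) {t : ℝ} (ht : 0 ≤ t) :
    φ t ≤ φ 0 + t * φ' 0 + t ^ 2 / 2 * φ'' 0 + M / 6 * t ^ 3 := by
  have hφ'_le : ∀ s, 0 ≤ s → φ' s ≤ φ' 0 + s * φ'' 0 + M / 2 * s ^ 2 := by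
    refine fun s hs => le_of_hasDerivAt_le_of_nonneg
      (v := fun s => φ' 0 + s * φ'' 0 + M / 2 * s ^ 2) hφ' (fun r => ?_) (by norm_num) hφ'' hs
    exact (((hasDerivAt_mul_const (φ'' 0)).const_add (φ' 0)).add
      ((hasDerivAt_pow 2 r).const_mul (M / 2))).congr_deriv (by ring)
  refine le_of_hasDerivAt_le_of_nonneg
    (v := fun s => φ 0 + s * φ' 0 + s ^ 2 / 2 * φ'' 0 + M / 6 * s ^ 3) hφ (fun r => ?_)
    (by norm_num) hφ'_le ht
  exact ((((hasDerivAt_mul_const (φ' 0)).const_add (φ 0)).add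
    (((hasDerivAt_pow 2 r).div_const 2).mul_const (φ'' 0))).add
    ((hasDerivAt_pow 3 r).const_mul (M / 6))).congr_deriv (by ring)

section

variable {E : Type*} [NormedAddCommGroup E] [NormedSpace ℝ E]

lemma DifferentiableAt.hasDerivAt_comp_add_smul {F : Type*} [NormedAddCommGroup F]
    [NormedSpace ℝ F] {g : E → F} {x p : E} {t : ℝ} (h : DifferentiableAt ℝ g (x + t • p)) :
    HasDerivAt (fun s : ℝ => g (x + s • p)) (fderiv ℝ g (x + t • p) p) t := by
  have hline : HasDerivAt (fun s : ℝ => x + s • p) p t := by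
    simpa using ((hasDerivAt_id t).smul_const p).const_add x
  exact h.hasFDerivAt.comp_hasDerivAt t hline

lemma fderiv_fderiv_apply_sub_le {f : E → ℝ} {L : ℝ}
    (hlip : ∀ u v, ‖fderiv ℝ (fderiv ℝ f) u - fderiv ℝ (fderiv ℝ f) v‖ ≤ L * ‖u - v‖)
    (x p : E) {t : ℝ} (ht : 0 ≤ t) :
    fderiv ℝ (fderiv ℝ f) (x + t • p) p p ≤
      fderiv ℝ (fderiv ℝ f) x p p + L * ‖p‖ ^ 3 * t := by
  set D := fderiv ℝ (fderiv ℝ f) (x + t • p) - fderiv ℝ (fderiv ℝ f) x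
  have hD : fderiv ℝ (fderiv ℝ f) (x + t • p) p p - fderiv ℝ (fderiv ℝ f) x p p = D p p := by
    simp [D]
  have hD_le : D p p ≤ L * ‖p‖ ^ 3 * t :=
    calc D p p ≤ ‖D p p‖ := le_abs_self _
      _ ≤ ‖D‖ * ‖p‖ * ‖p‖ := D.le_opNorm₂ p p
      _ ≤ L * ‖x + t • p - x‖ * ‖p‖ * ‖p‖ := by gcongr; exact hlip _ _
      _ = L * ‖p‖ ^ 3 * t := by simp [norm_smul, abs_of_nonneg ht]; ring
  linarith

theorem le_taylor_two_of_lipschitz_fderiv_fderiv {f : E → ℝ} {L : ℝ}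
    (hf : Differentiable ℝ f) (hf' : Differentiable ℝ (fderiv ℝ f))
    (hlip : ∀ u v, ‖fderiv ℝ (fderiv ℝ f) u - fderiv ℝ (fderiv ℝ f) v‖ ≤ L * ‖u - v‖)
    (x p : E) {t : ℝ} (ht : 0 ≤ t) :
    f (x + t • p) ≤ f x + t * fderiv ℝ f x p + t ^ 2 / 2 * fderiv ℝ (fderiv ℝ f) x p p +
      L / 6 * t ^ 3 * ‖p‖ ^ 3 := by
  have hφ' : ∀ s : ℝ, HasDerivAt (fun s : ℝ => fderiv ℝ f (x + s • p) p)
      (fderiv ℝ (fderiv ℝ f) (x + s • p) p p) s := fun s =>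
    (ContinuousLinearMap.apply ℝ ℝ p).hasFDerivAt.comp_hasDerivAt s
      (hf' _).hasDerivAt_comp_add_smul
  have := le_cubic_taylor_of_hasDerivAt_s16 (fun s => (hf _).hasDerivAt_comp_add_smul) hφ'
    (fun s hs => by simpa using fderiv_fderiv_apply_sub_le hlip x p hs) ht
  simp only [zero_smul, add_zero] at this
  linarith

end

section

variable {E : Type*} [NormedAddCommGroup E] [InnerProductSpace ℝ E]

lemma inner_le_inner_add_of_norm_sub_le {a g d : E} {δ : ℝ} (h : ‖a - g‖ ≤ δ) :
    ⟪a, d⟫ ≤ ⟪g, d⟫ + δ * ‖d‖ := by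
  have : ⟪a - g, d⟫ ≤ δ * ‖d‖ := (real_inner_le_norm _ _).trans (by gcongr)
  rw [inner_sub_left] at this
  linarith

lemma apply_le_inner_add_of_norm_sub_innerSL_le {ℓ : E →L[ℝ] ℝ} {a : E} {δ : ℝ}
    (h : ‖ℓ - innerSL ℝ a‖ ≤ δ) (d : E) : ℓ d ≤ ⟪a, d⟫ + δ * ‖d‖ := by
  have : (ℓ - innerSL ℝ a) d ≤ δ * ‖d‖ :=
    (le_abs_self _).trans (((ℓ - innerSL ℝ a).le_opNorm d).trans (by gcongr))
  simp only [sub_apply, innerSL_apply_apply] at this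
  linarith

end

theorem negcurv_cubic_upper_bound_general {n : ℕ}
    (f : EuclideanSpace ℝ (Fin n) → ℝ) (hf : ContDiff ℝ 2 f)
    (L_H δ_H δ_g : ℝ)
    (hlip : ∀ u v : EuclideanSpace ℝ (Fin n),
      ‖fderiv ℝ (fderiv ℝ f) u - fderiv ℝ (fderiv ℝ f) v‖ ≤ L_H * ‖u - v‖)
    (x d g : EuclideanSpace ℝ (Fin n))
    (A : EuclideanSpace ℝ (Fin n) →L[ℝ] EuclideanSpace ℝ (Fin n))
    (hA : ∀ u : EuclideanSpace ℝ (Fin n),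
      ‖fderiv ℝ (fderiv ℝ f) x u - innerSL ℝ (A u)‖ ≤ δ_H * ‖u‖)
    (hcurv : ⟪d, A d⟫ ≤ -‖d‖ ^ 3)
    (hgrad : ‖gradient f x - g‖ ≤ δ_g)
    (hdg : ⟪d, g⟫ ≤ 0) :
    ∀ α ∈ Set.Icc (0:ℝ) 1,
      f (x + α • d) - f x ≤
        α * δ_g * ‖d‖ - (α ^ 2 / 2) * ‖d‖ ^ 3 + (α ^ 2 / 2) * δ_H * ‖d‖ ^ 2 +
          L_H / 6 * α ^ 3 * ‖d‖ ^ 3 := by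
  rintro α ⟨hα, -⟩
  have htaylor := le_taylor_two_of_lipschitz_fderiv_fderiv (hf.differentiable (by norm_num))
    ((hf.fderiv_right (m := 1) le_rfl).differentiable one_ne_zero) hlip x d hα
  have hgrad_d : fderiv ℝ f x d ≤ δ_g * ‖d‖ := by
    have := inner_le_inner_add_of_norm_sub_le (d := d) hgrad
    rw [inner_gradient_left, real_inner_comm] at this
    linarith
  have hhess_d : fderiv ℝ (fderiv ℝ f) x d d ≤ -‖d‖ ^ 3 + δ_H * ‖d‖ ^ 2 := by
    have := apply_le_inner_add_of_norm_sub_innerSL_le (hA d) d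
    rw [real_inner_comm] at this
    nlinarith
  linarith [mul_le_mul_of_nonneg_left hgrad_d hα,
    mul_le_mul_of_nonneg_left hhess_d (by positivity : 0 ≤ α ^ 2 / 2)]

theorem negcurv_cubic_upper_bound {n : ℕ}
    (f : EuclideanSpace ℝ (Fin n) → ℝ) (hf : ContDiff ℝ 2 f)
    (L_H δ_H δ_g : ℝ) (hL : 0 < L_H)
    (hlip : ∀ u v : EuclideanSpace ℝ (Fin n),
      ‖fderiv ℝ (fderiv ℝ f) u - fderiv ℝ (fderiv ℝ f) v‖ ≤ L_H * ‖u - v‖)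
    (x d g : EuclideanSpace ℝ (Fin n))
    (A : EuclideanSpace ℝ (Fin n) →L[ℝ] EuclideanSpace ℝ (Fin n))
    (hsymm : ∀ u v : EuclideanSpace ℝ (Fin n), ⟪A u, v⟫ = ⟪u, A v⟫)
    (hA : ∀ u : EuclideanSpace ℝ (Fin n),
      ‖fderiv ℝ (fderiv ℝ f) x u - innerSL ℝ (A u)‖ ≤ δ_H * ‖u‖)
    (hcurv : ⟪d, A d⟫ ≤ -‖d‖ ^ 3)
    (hgrad : ‖gradient f x - g‖ ≤ δ_g)
    (hdg : ⟪d, g⟫ ≤ 0) :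
    ∀ α ∈ Set.Icc (0:ℝ) 1,
      f (x + α • d) - f x ≤
        α * δ_g * ‖d‖ - (α ^ 2 / 2) * ‖d‖ ^ 3 + (α ^ 2 / 2) * δ_H * ‖d‖ ^ 2 +
          L_H / 6 * α ^ 3 * ‖d‖ ^ 3 :=
  negcurv_cubic_upper_bound_general f hf L_H δ_H δ_g hlip x d g A hA hcurv hgrad hdg
end
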